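/- Let x, k, y be positive integers with y > 1 such that x^3 + (x+1)^3 + ... + (x+k-1)^3 = y^2. If (x, k, y) is not of the form (p^(2c), 1, p^(3c)) for some prime p and positive integer c, and (x, k, y) ≠ (1, 2, 3), then y is divisible by at least two distinct primes. -/

import Mathlib

/-!
Write `e = x + (x + 1) + ⋯ + (x + k - 1)`. By Nicomachus' theorem the sum of cubes is a difference
of two squares of triangular numbers, which factors as `e * (e + x (x - 1))`. If `y` were a prime
power, both factors would be powers of the same prime, so for `k ≥ 2` the smaller one, `e`, divides
their difference `x (x - 1)`. A prime power dividing a product of coprime numbers divides one of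
them, forcing `e ≤ x` when `x ≥ 2`, which is absurd. For `x = 1` the two factors coincide, so
`y = k (k + 1) / 2`, and the same bound gives `y ≤ k + 1`, whence `k = 2`. For `k = 1` the equation `x ^ 3 = y ^ 2` in powers of a prime
forces `(x, y) = (p ^ 2c, p ^ 3c)`.
-/

open Finset

theorem sum_range_pow_three (n : ℕ) : ∑ i ∈ range n, i ^ 3 = (∑ i ∈ range n, i) ^ 2 := by
  induction n with
  | zero => simp
  | succ n ih =>
    have hgauss := sum_range_id_mul_two n
    rw [sum_range_succ, sum_range_succ, ih]
    rcases n with _ | m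
    · simp
    · simp only [Nat.add_sub_cancel] at hgauss
      nlinarith [hgauss]

theorem sum_range_add_mul_two (x k : ℕ) :
    (∑ i ∈ range k, (x + i)) * 2 + x * (x - 1) = (x + k) * (x + k - 1) := by
  rw [← sum_range_id_mul_two, ← sum_range_id_mul_two, sum_range_add (fun i => i)]
  ring

theorem sum_range_add_pow_three (x k : ℕ) :
    ∑ i ∈ range k, (x + i) ^ 3 =
      (∑ i ∈ range k, (x + i)) * (∑ i ∈ range k, (x + i) + x * (x - 1)) := by
  have hcubes := sum_range_add (fun i => i ^ 3) x k
  rw [sum_range_pow_three, sum_range_pow_three, sum_range_add (fun i => i)] at hcubes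
  rw [← sum_range_id_mul_two]
  linarith

theorem Nat.Prime.exists_eq_pow_of_pow_three_eq_pow {p x m : ℕ} (hp : p.Prime)
    (h : x ^ 3 = p ^ (2 * m)) : ∃ c, x = p ^ (2 * c) ∧ m = 3 * c := by
  obtain ⟨a, -, rfl⟩ := (Nat.dvd_prime_pow hp).1 (Dvd.intro_left _ h)
  rw [← pow_mul] at h
  have h3a : a * 3 = 2 * m := Nat.pow_right_injective hp.two_le h
  exact ⟨a / 2, by congr 1; omega, by omega⟩

namespace IsPrimePow

theorem dvd_of_le_of_dvd {n a b : ℕ} (hn : IsPrimePow n) (ha : a ∣ n) (hb : b ∣ n)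
    (hab : a ≤ b) : a ∣ b := by
  obtain ⟨p, m, hp, -, rfl⟩ := (isPrimePow_nat_iff n).1 hn
  obtain ⟨i, -, rfl⟩ := (Nat.dvd_prime_pow hp).1 ha
  obtain ⟨j, -, rfl⟩ := (Nat.dvd_prime_pow hp).1 hb
  exact pow_dvd_pow p ((Nat.pow_le_pow_iff_right hp.one_lt).1 hab)

theorem le_of_dvd_mul_sub_one {q n : ℕ} (hq : IsPrimePow q) (hn : 1 < n)
    (h : q ∣ n * (n - 1)) : q ≤ n := by
  have hcop : n.Coprime (n - 1) := (Nat.coprime_self_sub_right hn.le).2 (Nat.coprime_one_right n)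
  rcases (hcop.isPrimePow_dvd_mul hq).1 h with hdvd | hdvd
  · exact Nat.le_of_dvd (by omega) hdvd
  · exact (Nat.le_of_dvd (by omega) hdvd).trans (Nat.sub_le n 1)

end IsPrimePow

theorem isPrimePow_of_not_exists_two_prime_dvd {n : ℕ} (hn : 1 < n)
    (h : ¬ ∃ p q : ℕ, p.Prime ∧ q.Prime ∧ p ≠ q ∧ p ∣ n ∧ q ∣ n) : IsPrimePow n := by
  refine isPrimePow_iff_unique_prime_dvd.2
    ⟨n.minFac, ⟨Nat.minFac_prime hn.ne', Nat.minFac_dvd n⟩, fun q ⟨hq, hqn⟩ => ?_⟩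
  by_contra hqp
  exact h ⟨q, n.minFac, hq, Nat.minFac_prime hn.ne', hqp, hqn, Nat.minFac_dvd n⟩

theorem eq_two_of_isPrimePow_sum_range_one_add {k : ℕ}
    (h : IsPrimePow (∑ i ∈ range k, (1 + i))) : k = 2 := by
  have hk : k ≠ 0 := by
    rintro rfl
    exact not_isPrimePow_zero (by simpa using h)
  have hgauss := sum_range_add_mul_two 1 k
  simp only [Nat.sub_self, mul_zero, add_zero, Nat.add_sub_cancel_left] at hgauss
  have hle : ∑ i ∈ range k, (1 + i) ≤ 1 + k :=
    h.le_of_dvd_mul_sub_one (by omega) ⟨2, by rw [Nat.add_sub_cancel_left, ← hgauss, mul_comm]⟩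
  nlinarith [h.two_le]

theorem not_isPrimePow_sum_range_add_pow_three {x k : ℕ} (hx : 2 ≤ x) (hk : 2 ≤ k) :
    ¬ IsPrimePow (∑ i ∈ range k, (x + i) ^ 3) := by
  intro hpp
  set e := ∑ i ∈ range k, (x + i) with he
  have hprod : e * (e + x * (x - 1)) = ∑ i ∈ range k, (x + i) ^ 3 :=
    (sum_range_add_pow_three x k).symm
  have hxe : x < e := by
    obtain ⟨j, rfl⟩ : ∃ j, k = j + 2 := ⟨k - 2, by omega⟩
    rw [he, sum_range_succ, sum_range_succ]
    omega
  have he_pp : IsPrimePow e := hpp.dvd (Dvd.intro _ hprod) (by omega)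
  have he_dvd : e ∣ e + x * (x - 1) :=
    hpp.dvd_of_le_of_dvd (Dvd.intro _ hprod) (Dvd.intro_left _ hprod) (Nat.le_add_right _ _)
  have hex : e ≤ x := he_pp.le_of_dvd_mul_sub_one hx ((Nat.dvd_add_right dvd_rfl).1 he_dvd)
  omega

theorem sum_consecutive_cubes_sq_two_prime_divisors (x k y : ℕ) (hx : 0 < x) (hk : 0 < k)
    (hy : 1 < y) (hsum : ∑ i ∈ Finset.range k, (x + i) ^ 3 = y ^ 2)
    (hnot : ¬ ∃ (p c : ℕ), p.Prime ∧ 0 < c ∧ x = p ^ (2 * c) ∧ k = 1 ∧ y = p ^ (3 * c))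
    (hne : ¬ (x = 1 ∧ k = 2 ∧ y = 3)) :
    ∃ p q : ℕ, p.Prime ∧ q.Prime ∧ p ≠ q ∧ p ∣ y ∧ q ∣ y := by
  by_contra hcon
  have hy_pp := isPrimePow_of_not_exists_two_prime_dvd hy hcon
  obtain rfl | hk2 : k = 1 ∨ 2 ≤ k := by omega
  · obtain ⟨p, μ, hp, hμ, rfl⟩ := (isPrimePow_nat_iff y).1 hy_pp
    obtain ⟨c, rfl, rfl⟩ := hp.exists_eq_pow_of_pow_three_eq_pow (m := μ)
      (by simpa [← pow_mul, mul_comm] using hsum)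
    exact hnot ⟨p, c, hp, by omega, rfl, rfl, rfl⟩
  obtain rfl | hx2 : x = 1 ∨ 2 ≤ x := by omega
  · have hey : ∑ i ∈ range k, (1 + i) = y := by
      refine Nat.pow_left_injective two_ne_zero ?_
      simpa [sum_range_add_pow_three, sq] using hsum
    obtain rfl := eq_two_of_isPrimePow_sum_range_one_add (hey ▸ hy_pp)
    exact hne ⟨rfl, rfl, by simpa [sum_range_succ] using hey.symm⟩
  · exact not_isPrimePow_sum_range_add_pow_three hx2 hk2 (hsum ▸ hy_pp.pow two_ne_zero)
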